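/- arXiv:quant-ph/0302174 — 2 statements merged into one kernel-verified Lean document; each statement's English description precedes it below -/
import Mathlib

section
/- Let (A_j)_{j∈J} be Kraus operators of a memoryless quantum channel. If a quantum source (ρ_m)_{m≥1} is stationary and weakly mixing, then the transformed family (E^{⊗m}(ρ_m))_{m≥1} is weakly mixing. -/
open Matrix Finset Filter Topology
open scoped ComplexOrder

noncomputable section

/-- `Mat d m` is the algebra of operators on the `m`-fold tensor power of `ℂ^d`,
realized as matrices indexed by words `Fin m → Fin d`. -/
abbrev Mat (d m : ℕ) : Type := Matrix (Fin m → Fin d) (Fin m → Fin d) ℂ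

/-- Kronecker (tensor) product `A ⊗ B` of `A : Mat d m` and `B : Mat d i`. -/
def tens {d m i : ℕ} (A : Mat d m) (B : Mat d i) : Mat d (m + i) :=
  Matrix.of fun x y =>
    A (fun k => x (Fin.castAdd i k)) (fun k => y (Fin.castAdd i k)) *
    B (fun k => x (Fin.natAdd m k)) (fun k => y (Fin.natAdd m k))

/-- A quantum source: each `ρ m` (for `m ≥ 1`) is positive semidefinite with trace 1. -/
def IsQSource (d : ℕ) (ρ : ∀ m, Mat d m) : Prop :=
  ∀ m, 1 ≤ m → (ρ m).PosSemidef ∧ (ρ m).trace = 1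

/-- Consistency: `tr(ρ_m a) = tr(ρ_{m+i} (a ⊗ I^{⊗i}))`. -/
def QConsistent (d : ℕ) (ρ : ∀ m, Mat d m) : Prop :=
  ∀ m i, 1 ≤ m → 1 ≤ i → ∀ a : Mat d m,
    (ρ m * a).trace = (ρ (m + i) * tens a (1 : Mat d i)).trace

/-- Stationarity: `tr(ρ_m a) = tr(ρ_{i+m} (I^{⊗i} ⊗ a))`. -/
def QStationary (d : ℕ) (ρ : ∀ m, Mat d m) : Prop :=
  ∀ m i, 1 ≤ m → 1 ≤ i → ∀ a : Mat d m,
    (ρ m * a).trace = (ρ (i + m) * tens (1 : Mat d i) a).trace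

/-- Ergodicity: Cesàro averages of `tr(ρ_{m+i} (a ⊗ I^{⊗(i-m)} ⊗ b))` converge to
`tr(ρ_m a)·tr(ρ_m b)`. -/
def QErgodic (d : ℕ) (ρ : ∀ m, Mat d m) : Prop :=
  ∀ m, 1 ≤ m → ∀ a b : Mat d m,
    Tendsto (fun n : ℕ =>
        (n : ℂ)⁻¹ * ∑ i ∈ Finset.Icc m n,
          (ρ (m + (i - m) + m) * tens (tens a (1 : Mat d (i - m))) b).trace)
      atTop (nhds ((ρ m * a).trace * (ρ m * b).trace))

/-- Weak mixing. -/
def QWeakMixing (d : ℕ) (ρ : ∀ m, Mat d m) : Prop :=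
  ∀ m, 1 ≤ m → ∀ a b : Mat d m,
    Tendsto (fun n : ℕ =>
        (n : ℝ)⁻¹ * ∑ i ∈ Finset.Icc m n,
          ‖(ρ (m + (i - m) + m) * tens (tens a (1 : Mat d (i - m))) b).trace
            - (ρ m * a).trace * (ρ m * b).trace‖)
      atTop (nhds 0)

/-- Strong mixing. -/
def QStrongMixing (d : ℕ) (ρ : ∀ m, Mat d m) : Prop :=
  ∀ m, 1 ≤ m → ∀ a b : Mat d m,
    Tendsto (fun i : ℕ =>
        (ρ (m + (i - m) + m) * tens (tens a (1 : Mat d (i - m))) b).trace)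
      atTop (nhds ((ρ m * a).trace * (ρ m * b).trace))

/-- The `m`-fold elementary tensor `A_{j 1} ⊗ ⋯ ⊗ A_{j m}` of Kraus operators. -/
def krausPow {d : ℕ} {J : Type} [Fintype J] (A : J → Matrix (Fin d) (Fin d) ℂ)
    {m : ℕ} (j : Fin m → J) : Mat d m :=
  Matrix.of fun x y => ∏ k, A (j k) (x k) (y k)

/-- The induced map `E^{⊗m}` of a memoryless channel with Kraus operators `A`. -/
def channelPow {d : ℕ} {J : Type} [Fintype J] (A : J → Matrix (Fin d) (Fin d) ℂ)
    (m : ℕ) (σ : Mat d m) : Mat d m :=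
  ∑ j : Fin m → J, krausPow A j * σ * (krausPow A j)ᴴ

/-- A classical source on alphabet `Fin d`: each `p m` (for `m ≥ 1`) is a
probability distribution on words of length `m`. -/
def IsCSource (d : ℕ) (p : ∀ m, (Fin m → Fin d) → ℝ) : Prop :=
  ∀ m, 1 ≤ m → (∀ x, 0 ≤ p m x) ∧ ∑ x, p m x = 1

def CConsistent (d : ℕ) (p : ∀ m, (Fin m → Fin d) → ℝ) : Prop :=
  ∀ m i, 1 ≤ m → 1 ≤ i → ∀ x : Fin m → Fin d,
    p m x = ∑ y : Fin i → Fin d, p (m + i) (Fin.append x y)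

def CStationary (d : ℕ) (p : ∀ m, (Fin m → Fin d) → ℝ) : Prop :=
  ∀ m i, 1 ≤ m → 1 ≤ i → ∀ x : Fin m → Fin d,
    p m x = ∑ y : Fin i → Fin d, p (i + m) (Fin.append y x)

def CErgodic (d : ℕ) (p : ∀ m, (Fin m → Fin d) → ℝ) : Prop :=
  ∀ m, 1 ≤ m → ∀ x y : Fin m → Fin d,
    Tendsto (fun n : ℕ =>
        (n : ℝ)⁻¹ * ∑ i ∈ Finset.Icc m n,
          ∑ z : Fin (i - m) → Fin d, p (m + (i - m) + m) (Fin.append (Fin.append x z) y))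
      atTop (nhds (p m x * p m y))

def CWeakMixing (d : ℕ) (p : ∀ m, (Fin m → Fin d) → ℝ) : Prop :=
  ∀ m, 1 ≤ m → ∀ x y : Fin m → Fin d,
    Tendsto (fun n : ℕ =>
        (n : ℝ)⁻¹ * ∑ i ∈ Finset.Icc m n,
          |(∑ z : Fin (i - m) → Fin d, p (m + (i - m) + m) (Fin.append (Fin.append x z) y))
            - p m x * p m y|)
      atTop (nhds 0)

def CStrongMixing (d : ℕ) (p : ∀ m, (Fin m → Fin d) → ℝ) : Prop :=
  ∀ m, 1 ≤ m → ∀ x y : Fin m → Fin d,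
    Tendsto (fun i : ℕ =>
        ∑ z : Fin (i - m) → Fin d, p (m + (i - m) + m) (Fin.append (Fin.append x z) y))
      atTop (nhds (p m x * p m y))

/-- The classically correlated state `∑_x p(x) · ψ_{x 1}ψ_{x 1}† ⊗ ⋯ ⊗ ψ_{x m}ψ_{x m}†`. -/
def clsState {d : ℕ} (ψ : Fin d → Fin d → ℂ) {m : ℕ} (pm : (Fin m → Fin d) → ℝ) : Mat d m :=
  ∑ x : Fin m → Fin d, (pm x : ℂ) •
    Matrix.of (fun u v => ∏ k, ψ (x k) (u k) * star (ψ (x k) (v k)))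

/-- The probability `⟨u_{x 1} ⊗ ⋯ ⊗ u_{x m}, ρ (u_{x 1} ⊗ ⋯ ⊗ u_{x m})⟩` of
measurement outcome `x` in the product basis built from `u`. -/
def measProb {d m : ℕ} (ρ : Mat d m) (u : Fin d → Fin d → ℂ) (x : Fin m → Fin d) : ℝ :=
  (∑ v : Fin m → Fin d, ∑ w : Fin m → Fin d,
    star (∏ k, u (x k) (v k)) * ρ v w * ∏ k, u (x k) (w k)).re

/-- Von Neumann entropy (base-2) of a Hermitian matrix, via its eigenvalues;
junk value `0` for non-Hermitian input.  The convention `0·log₂ 0 = 0` holds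
automatically since `Real.logb 2 0 = 0`. -/
def vnEntropy {n : Type} [Fintype n] [DecidableEq n] (ρ : Matrix n n ℂ) : ℝ :=
  if h : ρ.IsHermitian then -∑ k, h.eigenvalues k * Real.logb 2 (h.eigenvalues k) else 0

/-! Pass to the Heisenberg picture. The dual `X ↦ ∑_j K_j† X K_j` of the tensor-power channel is
multiplicative on tensor products and, since `∑ A_j† A_j = 1`, unital. So every correlation
`tr(E^{⊗n}(ρ_n) (a ⊗ 1 ⊗ b))` of the transformed source is the correlation `tr(ρ_n (a' ⊗ 1 ⊗ b'))`
of `ρ` for the dual observables `a' = E*^{⊗m}(a)`, `b' = E*^{⊗m}(b)`, and likewise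
`tr(E^{⊗m}(ρ_m) a) = tr(ρ_m a')`; weak mixing of `ρ` for `a', b'` is then the claim for `a, b`. -/

open scoped Kronecker

section Tensor

variable {d m i : ℕ}

theorem tens_eq_submatrix_kronecker (X : Mat d m) (Y : Mat d i) :
    tens X Y = (X ⊗ₖ Y).submatrix (Fin.appendEquiv m i).symm (Fin.appendEquiv m i).symm :=
  rfl

theorem tens_mul (X X' : Mat d m) (Y Y' : Mat d i) :
    tens X Y * tens X' Y' = tens (X * X') (Y * Y') := by
  simp only [tens_eq_submatrix_kronecker, submatrix_mul_equiv, mul_kronecker_mul]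

theorem conjTranspose_tens (X : Mat d m) (Y : Mat d i) : (tens X Y)ᴴ = tens Xᴴ Yᴴ := by
  simp only [tens_eq_submatrix_kronecker, conjTranspose_submatrix, conjTranspose_kronecker]

theorem tens_one_one : tens (1 : Mat d m) (1 : Mat d i) = 1 := by
  simp only [tens_eq_submatrix_kronecker, one_kronecker_one, submatrix_one_equiv]

theorem tens_sum_sum {ι κ : Type*} [Fintype ι] [Fintype κ] (f : ι → Mat d m) (g : κ → Mat d i) :
    tens (∑ a, f a) (∑ b, g b) = ∑ a, ∑ b, tens (f a) (g b) := by
  ext x y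
  simp [tens, Matrix.sum_apply, Finset.sum_mul_sum]

end Tensor

section Channel

variable {d : ℕ} {J : Type} [Fintype J] (A : J → Matrix (Fin d) (Fin d) ℂ)

def channelDualPow (m : ℕ) (X : Mat d m) : Mat d m :=
  ∑ j : Fin m → J, (krausPow A j)ᴴ * X * krausPow A j

theorem trace_channelPow_mul (m : ℕ) (σ X : Mat d m) :
    (channelPow A m σ * X).trace = (σ * channelDualPow A m X).trace := by
  simp only [channelPow, channelDualPow, Finset.sum_mul, Matrix.mul_sum, Matrix.trace_sum]
  refine Finset.sum_congr rfl fun j _ => ?_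
  rw [Matrix.mul_assoc, Matrix.mul_assoc, Matrix.trace_mul_comm]
  simp only [Matrix.mul_assoc]

theorem krausPow_append {m i : ℕ} (j₁ : Fin m → J) (j₂ : Fin i → J) :
    krausPow A (Fin.append j₁ j₂) = tens (krausPow A j₁) (krausPow A j₂) := by
  ext x y
  simp [krausPow, tens, Fin.prod_univ_add]

theorem krausPow_fin_zero (j : Fin 0 → J) : krausPow A j = 1 := by
  ext x y
  simp [krausPow, Subsingleton.elim x y, Matrix.one_apply]

theorem krausPow_fin_one (j : Fin 1 → J) :
    krausPow A j = (A (j 0)).submatrix (Equiv.funUnique (Fin 1) (Fin d))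
      (Equiv.funUnique (Fin 1) (Fin d)) := by
  ext x y
  simp [krausPow]

theorem channelDualPow_tens {m i : ℕ} (X : Mat d m) (Y : Mat d i) :
    channelDualPow A (m + i) (tens X Y) = tens (channelDualPow A m X) (channelDualPow A i Y) := by
  rw [channelDualPow, ← Equiv.sum_comp (Fin.appendEquiv m i), Fintype.sum_prod_type,
    channelDualPow, channelDualPow, tens_sum_sum]
  refine Finset.sum_congr rfl fun j₁ _ => Finset.sum_congr rfl fun j₂ _ => ?_
  show (krausPow A (Fin.append j₁ j₂))ᴴ * _ * krausPow A (Fin.append j₁ j₂) = _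
  rw [krausPow_append, conjTranspose_tens, tens_mul, tens_mul]

theorem channelDualPow_zero (X : Mat d 0) : channelDualPow A 0 X = X := by
  simp [channelDualPow, krausPow_fin_zero]

theorem channelDualPow_one_one (hA : ∑ j, (A j)ᴴ * A j = 1) : channelDualPow A 1 1 = 1 := by
  rw [channelDualPow, ← (Equiv.funUnique (Fin 1) J).symm.sum_comp]
  simp only [krausPow_fin_one, Matrix.mul_one, conjTranspose_submatrix, submatrix_mul_equiv]
  rw [← submatrix_one_equiv (Equiv.funUnique (Fin 1) (Fin d)), ← hA]
  ext x y
  simp [Matrix.sum_apply]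

theorem channelDualPow_one (hA : ∑ j, (A j)ᴴ * A j = 1) (m : ℕ) :
    channelDualPow A m 1 = 1 := by
  induction m with
  | zero => exact channelDualPow_zero A 1
  | succ m ih =>
    rw [← tens_one_one, channelDualPow_tens, ih, channelDualPow_one_one A hA, tens_one_one]

end Channel

theorem channel_preserves_weak_mixing_general
    (d : ℕ) (J : Type) [Fintype J]
    (A : J → Matrix (Fin d) (Fin d) ℂ) (hA : ∑ j, (A j)ᴴ * A j = 1)
    (ρ : ∀ m, Mat d m)
    (hwm : QWeakMixing d ρ) :
    QWeakMixing d (fun m => channelPow A m (ρ m)) := by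
  intro m hm a b
  refine (hwm m hm (channelDualPow A m a) (channelDualPow A m b)).congr fun n => ?_
  simp only [trace_channelPow_mul, channelDualPow_tens, channelDualPow_one A hA]

/-- a memoryless channel maps a stationary weakly mixing quantum
source to a weakly mixing one. -/
theorem channel_preserves_weak_mixing
    (d : ℕ) (hd : 2 ≤ d) (J : Type) [Fintype J]
    (A : J → Matrix (Fin d) (Fin d) ℂ) (hA : ∑ j, (A j)ᴴ * A j = 1)
    (ρ : ∀ m, Mat d m) (hρ : IsQSource d ρ) (hstat : QStationary d ρ)
    (hwm : QWeakMixing d ρ) :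
    QWeakMixing d (fun m => channelPow A m (ρ m)) :=
  channel_preserves_weak_mixing_general d J A hA ρ hwm
end
end

section
/- Let ψ_1,…,ψ_d ∈ ℂ^d be linearly independent unit vectors and let p = (p_m)_{m≥1} be a consistent, stationary, and weakly mixing classical source on the alphabet Fin d. Then the classically correlated quantum source (ρ^{cls}_m)_{m≥1} is weakly mixing. -/
open Matrix Finset Filter Topology
open scoped ComplexOrder

noncomputable section

/-!
Since the product vectors `ψ_z = ψ_{z 1} ⊗ ⋯ ⊗ ψ_{z j}` are unit vectors, `⟨ψ_z, I ψ_z⟩ = 1`;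
hence, expanding `ρ^{cls}` as a mixture of product states, `tr(ρ^{cls}_{2m+j} (a ⊗ I^{⊗j} ⊗ b))` equals
`∑_{x,y} (∑_z p(x z y)) ⟨ψ_x, a ψ_x⟩ ⟨ψ_y, b ψ_y⟩`, while `tr(ρ^{cls}_m a) tr(ρ^{cls}_m b)` is the
same sum with `p(x) p(y)` in place of the marginal. The quantum deviation is therefore bounded by a
fixed finite combination of the classical deviations `|∑_z p(x z y) - p(x) p(y)|`, and Cesàro
averaging commutes with finite combinations.
-/

lemma Fintype.sum_fin_add_arrow {α β : Type*} [Fintype α] [AddCommMonoid β] {m i : ℕ}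
    (f : (Fin (m + i) → α) → β) :
    ∑ w, f w = ∑ x : Fin m → α, ∑ y : Fin i → α, f (Fin.append x y) := by
  rw [← (Fin.appendEquiv m i).sum_comp f, Fintype.sum_prod_type]
  rfl

lemma tendsto_inv_mul_sum_sum_mul {ι κ : Type*} [Fintype ι] [Fintype κ]
    {S : ℕ → Finset ℕ} {D : ℕ → ι → κ → ℝ} (c : ι → κ → ℝ)
    (hD : ∀ x y, Tendsto (fun n : ℕ => (n : ℝ)⁻¹ * ∑ i ∈ S n, D i x y) atTop (𝓝 0)) :
    Tendsto (fun n : ℕ => (n : ℝ)⁻¹ * ∑ i ∈ S n, ∑ x, ∑ y, D i x y * c x y) atTop (𝓝 0) := by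
  have hswap : ∀ n : ℕ, (n : ℝ)⁻¹ * ∑ i ∈ S n, ∑ x, ∑ y, D i x y * c x y
      = ∑ x, ∑ y, c x y * ((n : ℝ)⁻¹ * ∑ i ∈ S n, D i x y) := by
    intro n
    simp only [Finset.mul_sum, Finset.sum_comm (s := S n)]
    exact Finset.sum_congr rfl fun x _ => Finset.sum_congr rfl fun y _ =>
      Finset.sum_congr rfl fun i _ => by ring
  simp_rw [hswap]
  simpa using tendsto_finsetSum _ fun x _ => tendsto_finsetSum _ fun y _ =>
    (hD x y).const_mul (c x y)

section ClassicallyCorrelated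

variable {d : ℕ} (ψ : Fin d → Fin d → ℂ)

/-- `⟨ψ_x, A ψ_x⟩` for the product vector `ψ_x = ψ_{x 1} ⊗ ⋯ ⊗ ψ_{x m}`. -/
def prodExpect {m : ℕ} (x : Fin m → Fin d) (A : Mat d m) : ℂ :=
  ∑ u : Fin m → Fin d, ∑ v : Fin m → Fin d,
    (∏ k, ψ (x k) (u k) * star (ψ (x k) (v k))) * A v u

lemma trace_clsState_mul {m : ℕ} (q : (Fin m → Fin d) → ℝ) (A : Mat d m) :
    (clsState ψ q * A).trace = ∑ x, (q x : ℂ) * prodExpect ψ x A := by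
  simp only [clsState, Finset.sum_mul, Matrix.trace_sum, Matrix.smul_mul, Matrix.trace_smul,
    smul_eq_mul]
  rfl

lemma prodExpect_tens {m i : ℕ} (x : Fin m → Fin d) (z : Fin i → Fin d)
    (A : Mat d m) (B : Mat d i) :
    prodExpect ψ (Fin.append x z) (tens A B) = prodExpect ψ x A * prodExpect ψ z B := by
  simp only [prodExpect, Fintype.sum_fin_add_arrow (m := m) (i := i), Finset.sum_mul_sum]
  refine Finset.sum_congr rfl fun u₁ _ => Finset.sum_congr rfl fun u₂ _ =>
    Finset.sum_congr rfl fun v₁ _ => Finset.sum_congr rfl fun v₂ _ => ?_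
  have hprod : ∏ k : Fin (m + i), ψ (Fin.append x z k) (Fin.append u₁ u₂ k) *
        star (ψ (Fin.append x z k) (Fin.append v₁ v₂ k))
      = (∏ k, ψ (x k) (u₁ k) * star (ψ (x k) (v₁ k))) *
        ∏ k, ψ (z k) (u₂ k) * star (ψ (z k) (v₂ k)) := by
    simp [Fin.prod_univ_add]
  have htens : tens A B (Fin.append v₁ v₂) (Fin.append u₁ u₂) = A v₁ u₁ * B v₂ u₂ := by
    simp [tens]
  rw [hprod, htens]
  ring

lemma prodExpect_one (hunit : ∀ i, ∑ k, star (ψ i k) * ψ i k = 1) {i : ℕ}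
    (z : Fin i → Fin d) : prodExpect ψ z (1 : Mat d i) = 1 := by
  have hdiag : ∀ u : Fin i → Fin d,
      ∑ v : Fin i → Fin d, (∏ k, ψ (z k) (u k) * star (ψ (z k) (v k))) * (1 : Mat d i) v u
        = ∏ k, ψ (z k) (u k) * star (ψ (z k) (u k)) := by
    intro u
    simp [Matrix.one_apply]
  have hnorm : ∀ k, ∑ j, ψ (z k) j * star (ψ (z k) j) = 1 := fun k => by
    simpa only [mul_comm] using hunit (z k)
  simp only [prodExpect, hdiag]
  rw [← Fintype.prod_sum fun k j => ψ (z k) j * star (ψ (z k) j)]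
  exact Finset.prod_eq_one fun k _ => hnorm k

lemma trace_clsState_mul_tens_one_tens (hunit : ∀ i, ∑ k, star (ψ i k) * ψ i k = 1)
    {m j : ℕ} (q : (Fin (m + j + m) → Fin d) → ℝ) (a b : Mat d m) :
    (clsState ψ q * tens (tens a (1 : Mat d j)) b).trace
      = ∑ x, ∑ y, ((∑ z : Fin j → Fin d, q (Fin.append (Fin.append x z) y) : ℝ) : ℂ)
          * (prodExpect ψ x a * prodExpect ψ y b) := by
  rw [trace_clsState_mul, Fintype.sum_fin_add_arrow (m := m + j) (i := m)]
  simp only [prodExpect_tens, Fintype.sum_fin_add_arrow (m := m) (i := j),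
    prodExpect_one ψ hunit, mul_one]
  refine Finset.sum_congr rfl fun x _ => ?_
  rw [Finset.sum_comm]
  refine Finset.sum_congr rfl fun y _ => ?_
  push_cast
  rw [Finset.sum_mul]

lemma norm_trace_clsState_mul_tens_one_tens_sub_le (hunit : ∀ i, ∑ k, star (ψ i k) * ψ i k = 1)
    {m j : ℕ} (q : (Fin (m + j + m) → Fin d) → ℝ) (p : (Fin m → Fin d) → ℝ) (a b : Mat d m) :
    ‖(clsState ψ q * tens (tens a (1 : Mat d j)) b).trace
        - (clsState ψ p * a).trace * (clsState ψ p * b).trace‖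
      ≤ ∑ x, ∑ y, |(∑ z : Fin j → Fin d, q (Fin.append (Fin.append x z) y)) - p x * p y|
          * (‖prodExpect ψ x a‖ * ‖prodExpect ψ y b‖) := by
  have hprod : (clsState ψ p * a).trace * (clsState ψ p * b).trace
      = ∑ x, ∑ y, ((p x * p y : ℝ) : ℂ) * (prodExpect ψ x a * prodExpect ψ y b) := by
    rw [trace_clsState_mul, trace_clsState_mul, Finset.sum_mul_sum]
    push_cast
    exact Finset.sum_congr rfl fun x _ => Finset.sum_congr rfl fun y _ => by ring
  rw [trace_clsState_mul_tens_one_tens ψ hunit, hprod, ← Finset.sum_sub_distrib]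
  simp only [← Finset.sum_sub_distrib, ← sub_mul, ← Complex.ofReal_sub]
  refine (norm_sum_le _ _).trans (Finset.sum_le_sum fun x _ => ?_)
  refine (norm_sum_le _ _).trans (Finset.sum_le_sum fun y _ => ?_)
  rw [norm_mul, norm_mul, Complex.norm_real, Real.norm_eq_abs]

end ClassicallyCorrelated

theorem cls_source_weak_mixing_general
    (d : ℕ) (ψ : Fin d → Fin d → ℂ)
    (hunit : ∀ i, ∑ k, star (ψ i k) * ψ i k = 1)
    (p : ∀ m, (Fin m → Fin d) → ℝ) (hwm : CWeakMixing d p) :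
    QWeakMixing d (fun m => clsState ψ (p m)) := by
  intro m hm a b
  refine squeeze_zero (fun n => by positivity) (fun n => ?_)
    (tendsto_inv_mul_sum_sum_mul (fun x y => ‖prodExpect ψ x a‖ * ‖prodExpect ψ y b‖) (hwm m hm))
  gcongr with i
  exact norm_trace_clsState_mul_tens_one_tens_sub_le ψ hunit _ _ a b

/-- a classically correlated quantum source built from a weakly
mixing classical source is weakly mixing. -/
theorem cls_source_weak_mixing
    (d : ℕ) (hd : 2 ≤ d) (ψ : Fin d → Fin d → ℂ)
    (hind : LinearIndependent ℂ ψ)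
    (hunit : ∀ i, ∑ k, star (ψ i k) * ψ i k = 1)
    (p : ∀ m, (Fin m → Fin d) → ℝ) (hp : IsCSource d p)
    (hc : CConsistent d p) (hs : CStationary d p) (hwm : CWeakMixing d p) :
    QWeakMixing d (fun m => clsState ψ (p m)) :=
  cls_source_weak_mixing_general d ψ hunit p hwm
end
end
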